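/- Fix an integer m ≥ 1, let k be an integer with 1 ≤ k ≤ 2m, and let t₁ = (2(2m+1) − 2k)π/(2(2m+1)), t₂ = (2(2m+1) + 2k)π/(2(2m+1)) be the Type II double-point times with j = 2. Let Z(t) = cos((6m+7)t + π/4). Then Z(t₁) = (−1)^{k+1} (1/√2)(cos(4kπ/(2m+1)) + sin(4kπ/(2m+1))) and Z(t₂) = (−1)^{k+1} (1/√2)(cos(4kπ/(2m+1)) − sin(4kπ/(2m+1))); consequently the sign of Z(t₁) − Z(t₂) equals (−1)^{k+1} times the sign of sin(4kπ/(2m+1)). -/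
import Mathlib

open Real

lemma sign_pos_mul (c s : ℝ) (hc : 0 < c) : Real.sign (c * s) = Real.sign s := by
  rcases lt_trichotomy s 0 with h | h | h
  · rw [Real.sign_of_neg h, Real.sign_of_neg (mul_neg_of_pos_of_neg hc h)]
  · simp [h, Real.sign_zero]
  · rw [Real.sign_of_pos h, Real.sign_of_pos (mul_pos hc h)]

lemma neg_one_zpow_eq (a b : ℤ) (h : Even (a - b)) : (-1 : ℝ) ^ a = (-1 : ℝ) ^ b := by
  obtain ⟨c, hc⟩ := h
  have ha : a = b + 2 * c := by omega
  rw [ha, zpow_add₀ (by norm_num : (-1:ℝ) ≠ 0), zpow_mul]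
  norm_num

theorem typeII_j2_height_values
    (m k : ℤ) (hm : 1 ≤ m) (hk1 : 1 ≤ k) (hk2 : k ≤ 2 * m)
    (Z : ℝ → ℝ)
    (hZ : ∀ t, Z t = Real.cos ((6 * (m : ℝ) + 7) * t + π / 4))
    (t₁ t₂ : ℝ)
    (ht₁ : t₁ = (2 * (2 * (m : ℝ) + 1) - 2 * (k : ℝ)) * π / (2 * (2 * (m : ℝ) + 1)))
    (ht₂ : t₂ = (2 * (2 * (m : ℝ) + 1) + 2 * (k : ℝ)) * π / (2 * (2 * (m : ℝ) + 1))) :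
    Z t₁ = (-1 : ℝ) ^ (k + 1) * (1 / Real.sqrt 2) *
        (Real.cos (4 * (k : ℝ) * π / (2 * (m : ℝ) + 1)) +
          Real.sin (4 * (k : ℝ) * π / (2 * (m : ℝ) + 1))) ∧
    Z t₂ = (-1 : ℝ) ^ (k + 1) * (1 / Real.sqrt 2) *
        (Real.cos (4 * (k : ℝ) * π / (2 * (m : ℝ) + 1)) -
          Real.sin (4 * (k : ℝ) * π / (2 * (m : ℝ) + 1))) ∧
    Real.sign (Z t₁ - Z t₂) =
      (-1 : ℝ) ^ (k + 1) * Real.sign (Real.sin (4 * (k : ℝ) * π / (2 * (m : ℝ) + 1))) := by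
  have hden : (2 * (m : ℝ) + 1) ≠ 0 := by positivity
  set θ : ℝ := 4 * (k : ℝ) * π / (2 * (m : ℝ) + 1) with hθ
  have hs2 : Real.sqrt 2 ≠ 0 := by positivity
  have hcos4 : Real.cos (π / 4) = 1 / Real.sqrt 2 := by
    rw [Real.cos_pi_div_four]
    rw [eq_div_iff hs2, div_mul_eq_mul_div, Real.mul_self_sqrt (by norm_num)]; norm_num
  have hsin4 : Real.sin (π / 4) = 1 / Real.sqrt 2 := by
    rw [Real.sin_pi_div_four]
    rw [eq_div_iff hs2, div_mul_eq_mul_div, Real.mul_self_sqrt (by norm_num)]; norm_num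
  have h1 : Z t₁ = (-1 : ℝ) ^ (k + 1) * (1 / Real.sqrt 2) *
      (Real.cos θ + Real.sin θ) := by
    have harg : (6 * (m : ℝ) + 7) * t₁ + π / 4
        = ((6 * m + 7 - 3 * k : ℤ) : ℝ) * π - (θ - π / 4) := by
      rw [ht₁, hθ]; push_cast; field_simp; ring
    rw [hZ, harg, Real.cos_int_mul_pi_sub,
      neg_one_zpow_eq (6 * m + 7 - 3 * k) (k + 1) ⟨3 * m + 3 - 2 * k, by ring⟩,
      show θ - π / 4 = -(π / 4 - θ) by ring, Real.cos_neg, Real.cos_sub,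
      hcos4, hsin4]
    ring
  have h2 : Z t₂ = (-1 : ℝ) ^ (k + 1) * (1 / Real.sqrt 2) *
      (Real.cos θ - Real.sin θ) := by
    have harg : (6 * (m : ℝ) + 7) * t₂ + π / 4
        = ((6 * m + 7 + 3 * k : ℤ) : ℝ) * π - (-(θ + π / 4)) := by
      rw [ht₂, hθ]; push_cast; field_simp; ring
    rw [hZ, harg, Real.cos_int_mul_pi_sub,
      neg_one_zpow_eq (6 * m + 7 + 3 * k) (k + 1) ⟨3 * m + 3 + k, by ring⟩,
      Real.cos_neg, Real.cos_add, hcos4, hsin4]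
    ring
  refine ⟨h1, h2, ?_⟩
  have hdiff : Z t₁ - Z t₂ = (-1 : ℝ) ^ (k + 1) * (2 / Real.sqrt 2 * Real.sin θ) := by
    rw [h1, h2]; ring
  have hpos : (0 : ℝ) < 2 / Real.sqrt 2 := by positivity
  rcases Int.even_or_odd (k + 1) with he | ho
  · have hE : (-1 : ℝ) ^ (k + 1) = 1 := by
      rw [neg_one_zpow_eq (k + 1) 0 (by simpa using he)]; norm_num
    rw [hE] at hdiff ⊢
    rw [hdiff, one_mul, one_mul, sign_pos_mul _ _ hpos]
  · have hO : (-1 : ℝ) ^ (k + 1) = -1 := by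
      rw [neg_one_zpow_eq (k + 1) 1 (by obtain ⟨c, hc⟩ := ho; exact ⟨c, by omega⟩)]; norm_num
    rw [hO] at hdiff ⊢
    rw [hdiff, show (-1 : ℝ) * (2 / Real.sqrt 2 * Real.sin θ)
        = 2 / Real.sqrt 2 * -Real.sin θ by ring,
      sign_pos_mul _ _ hpos, Real.sign_neg]
    ring
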